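/- Let G be a finite simple graph whose edge set is partitioned into regions E_1, …, E_k, let V_s be a skeleton set (a set of vertices containing every boundary vertex of the partition), and let G_s be the associated skeleton graph. Then the number of connected components of G_s equals the number of connected components of G that contain at least one vertex of V_s. -/

import Mathlib

/-- The region graph `R_i`: the graph on the full vertex set `V` whose edges are the
edges of the part `E i`. -/
def regG {V : Type*} {k : ℕ} (E : Fin k → Set (Sym2 V)) (i : Fin k) : SimpleGraph V :=
  SimpleGraph.fromEdgeSet (E i)

/-- The vertex type of the skeleton graph: skeleton vertices (elements of `Vs`)
together with one auxiliary vertex for each pair `(i, group)`, a group being a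
nonempty equivalence class of `Vs ∩ V(R i)` under connectivity in `R i` (encoded by
the connected component of `R i` containing the group). -/
def SkelV {V : Type*} {k : ℕ} (E : Fin k → Set (Sym2 V)) (Vs : Set V) : Type _ :=
  {x : V ⊕ (Σ i : Fin k, (regG E i).ConnectedComponent) //
    Sum.elim (· ∈ Vs)
      (fun p => ∃ v ∈ Vs, v ∈ (regG E p.1).support ∧
        (regG E p.1).connectedComponentMk v = p.2) x}

/-- The skeleton graph: each auxiliary vertex `(i, c)` is joined to every vertex of
its group, i.e. to every `v ∈ Vs` with `v ∈ V(R i)` lying in the component `c`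
of `R i`. -/
def skelGraph {V : Type*} {k : ℕ} (E : Fin k → Set (Sym2 V)) (Vs : Set V) :
    SimpleGraph (SkelV E Vs) where
  Adj x y :=
    (∃ (v : V) (i : Fin k) (c : (regG E i).ConnectedComponent),
      x.1 = Sum.inl v ∧ y.1 = Sum.inr ⟨i, c⟩ ∧
      v ∈ (regG E i).support ∧ (regG E i).connectedComponentMk v = c) ∨
    (∃ (v : V) (i : Fin k) (c : (regG E i).ConnectedComponent),
      y.1 = Sum.inl v ∧ x.1 = Sum.inr ⟨i, c⟩ ∧
      v ∈ (regG E i).support ∧ (regG E i).connectedComponentMk v = c)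
  symm := ⟨fun x y h => h.elim Or.inr Or.inl⟩
  loopless := ⟨by
    rintro x (⟨v, i, c, h1, h2, -, -⟩ | ⟨v, i, c, h1, h2, -, -⟩) <;>
      · rw [h1] at h2; simp at h2⟩

/-!
Both component sets are quotients of `Vs`: every auxiliary vertex of the skeleton graph is
adjacent to a skeleton vertex, and every component of `G` meeting `Vs` is the component of a
skeleton vertex. So it suffices that two skeleton vertices are connected in the skeleton graph
iff they are connected in `G`. Sending an auxiliary vertex to the component of `G` containing its
region component shows that skeleton paths give `G`-paths. Conversely, cut a `G`-walk between
skeleton vertices where it changes region: the vertex there lies on edges of two regions, so it is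
a boundary vertex and hence in `Vs`, and each maximal single-region stretch is bridged by
the auxiliary vertex of its group.
-/

open SimpleGraph

theorem SimpleGraph.Reachable.apply_eq_of_forall_adj {W β : Type*} {H : SimpleGraph W}
    {f : W → β} (hf : ∀ x y, H.Adj x y → f x = f y) {x y : W} (h : H.Reachable x y) :
    f x = f y := by
  obtain ⟨p⟩ := h
  induction p with
  | nil => rfl
  | cons hadj _ ih => exact (hf _ _ hadj).trans ih

theorem Nat.card_eq_of_surjective_of_apply_eq_iff {α β γ : Type*} {f : α → β} {g : α → γ}
    (hf : Function.Surjective f) (hg : Function.Surjective g)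
    (hfg : ∀ a b, f a = f b ↔ g a = g b) : Nat.card β = Nat.card γ :=
  Nat.card_congr <| (Setoid.quotientKerEquivOfSurjective f hf).symm.trans <|
    (Quotient.congrRight hfg).trans (Setoid.quotientKerEquivOfSurjective g hg)

section Skeleton

variable {V : Type*} {k : ℕ} {E : Fin k → Set (Sym2 V)} {Vs : Set V}

theorem regG_le {G : SimpleGraph V} {i : Fin k} (h : E i ⊆ G.edgeSet) : regG E i ≤ G :=
  fun _ _ hadj => h ((fromEdgeSet_adj _).1 hadj).1

theorem exists_regG_adj {G : SimpleGraph V} (h : G.edgeSet ⊆ ⋃ i, E i) {u v : V}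
    (hadj : G.Adj u v) : ∃ i, (regG E i).Adj u v := by
  obtain ⟨i, hi⟩ := Set.mem_iUnion.1 (h (show s(u, v) ∈ G.edgeSet from hadj))
  exact ⟨i, (fromEdgeSet_adj _).2 ⟨hi, hadj.ne⟩⟩

theorem mem_of_mem_support_regG
    (hVs : ∀ v : V,
      (∃ i j, i ≠ j ∧ (∃ e ∈ E i, v ∈ e) ∧ (∃ e' ∈ E j, v ∈ e')) → v ∈ Vs)
    {i j : Fin k} (hij : i ≠ j) {v : V} (hi : v ∈ (regG E i).support)
    (hj : v ∈ (regG E j).support) : v ∈ Vs := by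
  obtain ⟨x, hx⟩ := hi
  obtain ⟨y, hy⟩ := hj
  exact hVs v ⟨i, j, hij, ⟨_, ((fromEdgeSet_adj _).1 hx).1, Sym2.mem_mk_left v x⟩,
    ⟨_, ((fromEdgeSet_adj _).1 hy).1, Sym2.mem_mk_left v y⟩⟩

variable (E) in
def SkelV.ofMem {v : V} (hv : v ∈ Vs) : SkelV E Vs := ⟨Sum.inl v, hv⟩

variable (E) in
def SkelV.group (i : Fin k) {v : V} (hv : v ∈ Vs) (hvi : v ∈ (regG E i).support) :
    SkelV E Vs :=
  ⟨Sum.inr ⟨i, (regG E i).connectedComponentMk v⟩, v, hv, hvi, rfl⟩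

theorem skelGraph_adj_ofMem_group {i : Fin k} {v : V} (hv : v ∈ Vs)
    (hvi : v ∈ (regG E i).support) :
    (skelGraph E Vs).Adj (SkelV.ofMem E hv) (SkelV.group E i hv hvi) :=
  Or.inl ⟨v, i, _, rfl, rfl, hvi, rfl⟩

theorem SkelV.group_eq_of_reachable {i : Fin k} {v w : V} (hv : v ∈ Vs) (hw : w ∈ Vs)
    (hvi : v ∈ (regG E i).support) (hwi : w ∈ (regG E i).support)
    (h : (regG E i).Reachable v w) : SkelV.group E i hv hvi = SkelV.group E i hw hwi := by
  apply Subtype.ext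
  simp only [SkelV.group, ConnectedComponent.eq.2 h]

theorem skelGraph_reachable_of_regG_reachable {i : Fin k} {v w : V} (hv : v ∈ Vs)
    (hw : w ∈ Vs) (h : (regG E i).Reachable v w) :
    (skelGraph E Vs).Reachable (SkelV.ofMem E hv) (SkelV.ofMem E hw) := by
  rcases eq_or_ne v w with rfl | hvw
  · rfl
  have hvi := mem_support_of_reachable hvw h
  have hwi := mem_support_of_reachable hvw.symm h.symm
  have hwg := skelGraph_adj_ofMem_group hw hwi
  rw [← SkelV.group_eq_of_reachable hv hw hvi hwi h] at hwg
  exact (skelGraph_adj_ofMem_group hv hvi).reachable.trans hwg.symm.reachable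

theorem skelGraph_reachable_of_walk
    (hVs : ∀ v : V,
      (∃ i j, i ≠ j ∧ (∃ e ∈ E i, v ∈ e) ∧ (∃ e' ∈ E j, v ∈ e')) → v ∈ Vs)
    {G : SimpleGraph V} (hcover : G.edgeSet ⊆ ⋃ i, E i) {u w : V} (p : G.Walk u w)
    {a : V} (ha : a ∈ Vs) (hau : a = u ∨ ∃ i, (regG E i).Reachable a u) (hw : w ∈ Vs) :
    (skelGraph E Vs).Reachable (SkelV.ofMem E ha) (SkelV.ofMem E hw) := by
  induction p generalizing a with
  | nil =>
    rcases hau with rfl | ⟨i, hi⟩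
    · rfl
    · exact skelGraph_reachable_of_regG_reachable ha hw hi
  | @cons u x w hadj p ih =>
    obtain ⟨j, hj⟩ := exists_regG_adj hcover hadj
    rcases hau with rfl | ⟨i, hi⟩
    · exact ih ha (Or.inr ⟨j, hj.reachable⟩) hw
    by_cases hu : u ∈ Vs
    · exact (skelGraph_reachable_of_regG_reachable ha hu hi).trans
        (ih hu (Or.inr ⟨j, hj.reachable⟩) hw)
    -- a vertex outside the skeleton is not a boundary vertex, so the walk stays in region `i`
    have hau : a ≠ u := by rintro rfl; exact hu ha
    obtain rfl : j = i := by_contra fun hji => hu <| mem_of_mem_support_regG hVs hji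
      hj.left_mem_support (mem_support_of_reachable hau.symm hi.symm)
    exact ih ha (Or.inr ⟨j, hi.trans hj.reachable⟩) hw

theorem exists_skelGraph_reachable_ofMem (x : SkelV E Vs) :
    ∃ (v : V) (hv : v ∈ Vs), (skelGraph E Vs).Reachable (SkelV.ofMem E hv) x := by
  obtain ⟨v | ⟨i, c⟩, hx⟩ := x
  · exact ⟨v, hx, .rfl⟩
  · obtain ⟨v, hv, hvi, hc⟩ := id hx
    change (regG E i).connectedComponentMk v = c at hc
    subst hc
    exact ⟨v, hv, (skelGraph_adj_ofMem_group hv hvi).reachable⟩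

variable (Vs) in
def skelProj {G : SimpleGraph V} (hle : ∀ i, regG E i ≤ G) :
    SkelV E Vs → G.ConnectedComponent :=
  fun x => Sum.elim G.connectedComponentMk (fun p => p.2.map (Hom.ofLE (hle p.1))) x.1

theorem skelProj_eq_of_adj {G : SimpleGraph V} (hle : ∀ i, regG E i ≤ G) {x y : SkelV E Vs}
    (h : (skelGraph E Vs).Adj x y) : skelProj Vs hle x = skelProj Vs hle y := by
  rcases h with ⟨v, i, c, hx, hy, -, rfl⟩ | ⟨v, i, c, hy, hx, -, rfl⟩ <;>
    simp [skelProj, hx, hy, ConnectedComponent.map_mk]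

theorem reachable_of_skelGraph_reachable {G : SimpleGraph V} (hle : ∀ i, regG E i ≤ G)
    {v w : V} {hv : v ∈ Vs} {hw : w ∈ Vs}
    (h : (skelGraph E Vs).Reachable (SkelV.ofMem E hv) (SkelV.ofMem E hw)) :
    G.Reachable v w :=
  ConnectedComponent.eq.1 (h.apply_eq_of_forall_adj fun _ _ => skelProj_eq_of_adj hle)

theorem skelGraph_reachable_ofMem_iff
    (hVs : ∀ v : V,
      (∃ i j, i ≠ j ∧ (∃ e ∈ E i, v ∈ e) ∧ (∃ e' ∈ E j, v ∈ e')) → v ∈ Vs)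
    {G : SimpleGraph V} (hunion : ⋃ i, E i = G.edgeSet) {v w : V} (hv : v ∈ Vs)
    (hw : w ∈ Vs) :
    (skelGraph E Vs).Reachable (SkelV.ofMem E hv) (SkelV.ofMem E hw) ↔ G.Reachable v w :=
  ⟨reachable_of_skelGraph_reachable fun i => regG_le (hunion ▸ Set.subset_iUnion E i),
    fun ⟨p⟩ => skelGraph_reachable_of_walk hVs hunion.ge p hv (Or.inl rfl) hw⟩

end Skeleton

theorem stmt6_general {V : Type*} (G : SimpleGraph V) {k : ℕ}
    (E : Fin k → Set (Sym2 V))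
    (hunion : ⋃ i, E i = G.edgeSet)
    (Vs : Set V)
    (hVs : ∀ v : V,
      (∃ i j, i ≠ j ∧ (∃ e ∈ E i, v ∈ e) ∧ (∃ e' ∈ E j, v ∈ e')) → v ∈ Vs) :
    Nat.card (skelGraph E Vs).ConnectedComponent =
      Nat.card {c : G.ConnectedComponent // ∃ v ∈ Vs, G.connectedComponentMk v = c} := by
  refine Nat.card_eq_of_surjective_of_apply_eq_iff
    (f := fun v : Vs => (skelGraph E Vs).connectedComponentMk (SkelV.ofMem E v.2))
    (g := fun v : Vs => ⟨G.connectedComponentMk v, v, v.2, rfl⟩) ?_ ?_ ?_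
  · refine ConnectedComponent.ind fun x => ?_
    obtain ⟨v, hv, h⟩ := exists_skelGraph_reachable_ofMem x
    exact ⟨⟨v, hv⟩, ConnectedComponent.eq.2 h⟩
  · rintro ⟨c, v, hv, rfl⟩
    exact ⟨⟨v, hv⟩, rfl⟩
  · rintro ⟨v, hv⟩ ⟨w, hw⟩
    simpa only [ConnectedComponent.eq, Subtype.mk.injEq]
      using skelGraph_reachable_ofMem_iff hVs hunion hv hw

/-- Let the edge set of a finite simple graph `G` be partitioned into
regions `E 0, …, E (k-1)`, let `Vs` be a skeleton set (containing every boundary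
vertex), and let `skelGraph E Vs` be the associated skeleton graph.  Then the
number of connected components of the skeleton graph equals the number of connected
components of `G` containing at least one vertex of `Vs`. -/
theorem stmt6 {V : Type*} [Fintype V] (G : SimpleGraph V) {k : ℕ}
    (E : Fin k → Set (Sym2 V))
    (hunion : ⋃ i, E i = G.edgeSet)
    (hdisj : ∀ i j, i ≠ j → Disjoint (E i) (E j))
    (Vs : Set V)
    (hVs : ∀ v : V,
      (∃ i j, i ≠ j ∧ (∃ e ∈ E i, v ∈ e) ∧ (∃ e' ∈ E j, v ∈ e')) → v ∈ Vs) :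
    Nat.card (skelGraph E Vs).ConnectedComponent =
      Nat.card {c : G.ConnectedComponent // ∃ v ∈ Vs, G.connectedComponentMk v = c} :=
  stmt6_general G E hunion Vs hVs
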